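/- Let F be a finite field with q elements and T = Tr(F). The vertex set of Γ(T) is the disjoint union of the q+1 sets A₁* = {[[u+z,0],[0,z]] : u ∈ F×, z ∈ F}, A₂* = {[[z,u],[0,z]] : u ∈ F×, z ∈ F}, and for each x ∈ F×, A₃ₓ* = {[[v+z, xv],[0,z]] : v ∈ F×, z ∈ F}; each of these sets has cardinality q^2 − q, and each induces a clique in Γ(T) (any two distinct matrices within the same set commute). -/

import Mathlib

open Matrix

/-- The ring of 2×2 upper triangular matrices over `R`. -/
def Tri (R : Type*) [CommRing R] : Subring (Matrix (Fin 2) (Fin 2) R) where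
  carrier := {A | A 1 0 = 0}
  mul_mem' := by
    intro a b ha hb
    simp only [Set.mem_setOf_eq] at *
    simp [Matrix.mul_apply, Fin.sum_univ_two, ha, hb]
  one_mem' := by simp [Matrix.one_apply]
  add_mem' := by
    intro a b ha hb
    simp_all [Matrix.add_apply]
  zero_mem' := by simp
  neg_mem' := by
    intro a ha
    simp_all

/-- The commuting graph of a ring `T`: vertices are the noncentral elements,
two distinct vertices are adjacent iff they commute. -/
def commGraph (T : Type*) [Ring T] : SimpleGraph {x : T // x ∉ Set.center T} where
  Adj a b := a ≠ b ∧ (a : T) * b = b * a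
  symm := by
    constructor
    rintro a b ⟨h1, h2⟩
    exact ⟨h1.symm, h2.symm⟩
  loopless := by constructor; rintro a ⟨h, _⟩; exact h rfl

variable {F : Type*} [Field F] [Fintype F]

/-- The set `A₁* = {[[u+z,0],[0,z]] : u ∈ F×, z ∈ F}`. -/
def A1star (F : Type*) [Field F] : Set (Tri F) :=
  {A | ∃ (u : Fˣ) (z : F), (A : Matrix (Fin 2) (Fin 2) F) = !![(u : F) + z, 0; 0, z]}

/-- The set `A₂* = {[[z,u],[0,z]] : u ∈ F×, z ∈ F}`. -/
def A2star (F : Type*) [Field F] : Set (Tri F) :=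
  {A | ∃ (u : Fˣ) (z : F), (A : Matrix (Fin 2) (Fin 2) F) = !![z, (u : F); 0, z]}

/-- The set `A₃ₓ* = {[[v+z, xv],[0,z]] : v ∈ F×, z ∈ F}` for `x ∈ F×`. -/
def A3star (F : Type*) [Field F] (x : Fˣ) : Set (Tri F) :=
  {A | ∃ (v : Fˣ) (z : F),
    (A : Matrix (Fin 2) (Fin 2) F) = !![(v : F) + z, (x : F) * v; 0, z]}

/-! Write an upper triangular matrix `!![a, b; 0, d]` as `d • 1 + !![a - d, b; 0, 0]`. Two such
matrices commute iff their vectors `(a - d, b)` are proportional, and a matrix is central iff its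
vector is zero. So the noncentral matrices fall into classes indexed by the points `[a - d : b]` of
the projective line over `F`, each a clique, and each parametrized bijectively by the scale
`v ∈ F×` and the scalar part `z ∈ F`; `A₁*`, `A₂*` and `A₃ₓ*` are the classes of `[1 : 0]`,
`[0 : 1]` and `[1 : x]`. -/

namespace Tri

variable {R : Type*} [CommRing R]

def mk (a b d : R) : Tri R := ⟨!![a, b; 0, d], rfl⟩

@[simp] lemma mk_val (a b d : R) : (mk a b d).1 = !![a, b; 0, d] := rfl

lemma mk_inj {a b d a' b' d' : R} : mk a b d = mk a' b' d' ↔ a = a' ∧ b = b' ∧ d = d' := by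
  rw [Subtype.ext_iff, mk_val, mk_val]
  simp [and_assoc]

lemma val_eq_of (A : Tri R) : A.1 = !![A.1 0 0, A.1 0 1; 0, A.1 1 1] := by
  rw [← show A.1 1 0 = 0 from A.2]
  exact Matrix.eta_fin_two A.1

lemma mk_eta (A : Tri R) : mk (A.1 0 0) (A.1 0 1) (A.1 1 1) = A :=
  Subtype.ext (val_eq_of A).symm

lemma mul_comm_iff (A B : Tri R) :
    A * B = B * A ↔ B.1 0 1 * (A.1 0 0 - A.1 1 1) = A.1 0 1 * (B.1 0 0 - B.1 1 1) := by
  rw [Subtype.ext_iff, Subring.coe_mul, Subring.coe_mul, val_eq_of A, val_eq_of B]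
  simp only [Matrix.mul_fin_two, ← Matrix.ext_iff, Fin.forall_fin_two]
  simp only [Matrix.of_apply, Matrix.cons_val', Matrix.cons_val_zero, Matrix.cons_val_one,
    Matrix.empty_val', Matrix.cons_val_fin_one, mul_zero, zero_mul, add_zero, zero_add, and_true,
    mul_comm (A.1 0 0) (B.1 0 0), mul_comm (A.1 1 1) (B.1 1 1), true_and]
  constructor <;> intro h <;> linear_combination h

lemma mem_center_iff (A : Tri R) :
    A ∈ Set.center (Tri R) ↔ A.1 0 1 = 0 ∧ A.1 0 0 = A.1 1 1 := by
  simp only [Semigroup.mem_center_iff, mul_comm_iff]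
  refine ⟨fun h => ⟨?_, ?_⟩, fun ⟨hb, hd⟩ B => by rw [hb, hd]; ring⟩
  · simpa using h (mk 1 0 0)
  · simpa [sub_eq_zero] using (h (mk 0 1 0)).symm

end Tri

section TriLine

variable {R : Type*} [CommRing R]

/-- The class of the point `[s : t]`: the matrices `z • 1 + v • !![s, t; 0, 0]` with `v` a unit. -/
def triLine (s t : R) : Set (Tri R) :=
  Set.range fun p : Rˣ × R => Tri.mk (s * p.1 + p.2) (t * p.1) p.2

lemma mem_triLine {s t : R} {A : Tri R} :
    A ∈ triLine s t ↔ ∃ v : Rˣ, A.1 0 0 - A.1 1 1 = s * v ∧ A.1 0 1 = t * v := by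
  constructor
  · rintro ⟨⟨v, z⟩, rfl⟩
    exact ⟨v, by simp, by simp⟩
  · rintro ⟨v, hd, hb⟩
    refine ⟨(v, A.1 1 1), ?_⟩
    change Tri.mk (s * v + A.1 1 1) (t * v) (A.1 1 1) = A
    rw [← hd, ← hb, sub_add_cancel, Tri.mk_eta]

lemma mem_triLine_iff_val_eq {s t : R} {A : Tri R} :
    A ∈ triLine s t ↔ ∃ (v : Rˣ) (z : R), A.1 = !![s * v + z, t * v; 0, z] := by
  simp [triLine, Subtype.ext_iff, eq_comm]

lemma triLine_mul_comm {s t : R} {A B : Tri R} (hA : A ∈ triLine s t) (hB : B ∈ triLine s t) :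
    A * B = B * A := by
  obtain ⟨v, hAd, hAb⟩ := mem_triLine.mp hA
  obtain ⟨w, hBd, hBb⟩ := mem_triLine.mp hB
  rw [Tri.mul_comm_iff, hAd, hAb, hBd, hBb]
  ring

lemma disjoint_triLine {s t s' t' : R} (h : s * t' ≠ t * s') :
    Disjoint (triLine s t) (triLine s' t') := by
  refine Set.disjoint_left.mpr fun A hA hA' => h ?_
  obtain ⟨v, hd, hb⟩ := mem_triLine.mp hA
  obtain ⟨w, hd', hb'⟩ := mem_triLine.mp hA'
  refine v.isUnit.mul_left_cancel ?_
  linear_combination t' * hd' - s' * hb' - t' * hd + s' * hb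

lemma notMem_center_of_mem_triLine {s t : R} (hst : s ≠ 0 ∨ t ≠ 0) {A : Tri R}
    (hA : A ∈ triLine s t) : A ∉ Set.center (Tri R) := by
  obtain ⟨v, hd, hb⟩ := mem_triLine.mp hA
  rw [Tri.mem_center_iff, ← sub_eq_zero (a := A.1 0 0), hb, hd, Units.mul_left_eq_zero,
    Units.mul_left_eq_zero]
  tauto

lemma nat_card_triLine [IsDomain R] {s t : R} (hst : s ≠ 0 ∨ t ≠ 0) :
    Nat.card (triLine s t) = Nat.card Rˣ * Nat.card R := by
  rw [triLine, Nat.card_range_of_injective, Nat.card_prod]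
  rintro ⟨v, z⟩ ⟨w, y⟩ h
  obtain ⟨hsv, htv, rfl⟩ : s * v + z = s * w + y ∧ t * v = t * w ∧ z = y := Tri.mk_inj.mp h
  have hvw : (v : R) = w := hst.elim (fun hs => mul_left_cancel₀ hs (add_right_cancel hsv))
    (fun ht => mul_left_cancel₀ ht htv)
  rw [Units.ext hvw]

end TriLine

lemma noncentral_eq_union {K : Type*} [Field K] :
    {A : Tri K | A ∉ Set.center (Tri K)} =
      triLine (1 : K) 0 ∪ triLine 0 1 ∪ ⋃ x : Kˣ, triLine 1 (x : K) := by
  refine Set.Subset.antisymm (fun A hA => ?_) ?_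
  · rw [Set.mem_ofPred_eq, Tri.mem_center_iff, ← sub_eq_zero (a := A.1 0 0)] at hA
    simp only [Set.mem_union, Set.mem_iUnion, mem_triLine]
    by_cases hb : A.1 0 1 = 0
    · exact Or.inl (Or.inl ⟨Units.mk0 _ fun hd => hA ⟨hb, hd⟩, by simp, by simp [hb]⟩)
    by_cases hd : A.1 0 0 - A.1 1 1 = 0
    · exact Or.inl (Or.inr ⟨Units.mk0 _ hb, by simp [hd], by simp⟩)
    · exact Or.inr ⟨Units.mk0 _ (div_ne_zero hb hd), Units.mk0 _ hd, by simp, by simp [hd]⟩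
  · refine Set.union_subset (Set.union_subset ?_ ?_) (Set.iUnion_subset fun x => ?_) <;>
      exact fun A => notMem_center_of_mem_triLine (by simp)

section Stars

variable {K : Type*} [Field K]

lemma A1star_eq_triLine : A1star K = triLine 1 0 := by
  ext A
  simp [A1star, mem_triLine_iff_val_eq]

lemma A2star_eq_triLine : A2star K = triLine 0 1 := by
  ext A
  simp [A2star, mem_triLine_iff_val_eq]

lemma A3star_eq_triLine (x : Kˣ) : A3star K x = triLine 1 (x : K) := by
  ext A
  simp [A3star, mem_triLine_iff_val_eq]

end Stars

/-- Theorem 2.9(i): the vertex set of the commuting graph of `Tri F` is the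
disjoint union of the `q + 1` sets `A₁*`, `A₂*`, `A₃ₓ*` (`x ∈ F×`), each of
cardinality `q^2 - q`, and each of these sets is a clique: any two of its
elements commute. -/
theorem commGraph_tri_field_components (q : ℕ) (hq : Fintype.card F = q) :
    ({A : Tri F | A ∉ Set.center (Tri F)} =
        A1star F ∪ A2star F ∪ ⋃ x : Fˣ, A3star F x) ∧
    (Disjoint (A1star F) (A2star F) ∧
      (∀ x : Fˣ, Disjoint (A1star F) (A3star F x)) ∧
      (∀ x : Fˣ, Disjoint (A2star F) (A3star F x)) ∧
      (∀ x y : Fˣ, x ≠ y → Disjoint (A3star F x) (A3star F y))) ∧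
    (Nat.card (A1star F) = q ^ 2 - q ∧ Nat.card (A2star F) = q ^ 2 - q ∧
      ∀ x : Fˣ, Nat.card (A3star F x) = q ^ 2 - q) ∧
    ((∀ B ∈ A1star F, ∀ C ∈ A1star F, B * C = C * B) ∧
      (∀ B ∈ A2star F, ∀ C ∈ A2star F, B * C = C * B) ∧
      (∀ x : Fˣ, ∀ B ∈ A3star F x, ∀ C ∈ A3star F x, B * C = C * B)) := by
  have hcard {s t : F} (hst : s ≠ 0 ∨ t ≠ 0) : Nat.card (triLine s t) = q ^ 2 - q := by
    rw [nat_card_triLine hst, Nat.card_units, Nat.card_eq_fintype_card, hq, Nat.sub_one_mul, sq]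
  simp only [A1star_eq_triLine, A2star_eq_triLine, A3star_eq_triLine]
  refine ⟨noncentral_eq_union, ⟨disjoint_triLine (by simp), fun _ => disjoint_triLine (by simp),
    fun _ => disjoint_triLine (by simp), fun x y hxy => disjoint_triLine ?_⟩,
    ⟨hcard (by simp), hcard (by simp), fun _ => hcard (by simp)⟩,
    fun _ hB _ hC => triLine_mul_comm hB hC, fun _ hB _ hC => triLine_mul_comm hB hC,
    fun _ _ hB _ hC => triLine_mul_comm hB hC⟩
  simpa [eq_comm] using (Units.val_injective.ne hxy)
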